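/- Let $\varphi$ be twice continuously differentiable with $L_H$-Lipschitz Hessian on a ball, let $x^*$ satisfy $\nabla\varphi(x^*) = 0$ and $\nabla^2\varphi(x^*) \succeq \alpha I$, $\delta_0 = \frac{\alpha}{2L_H}$, $L_g = \|\nabla^2\varphi(x^*)\| + L_H\delta_0$. Suppose $x \in B_{\delta_0}(x^*)$ and the step $d$ satisfies $\|x^* - (x+d)\| \leq \frac{2}{\alpha}(L_H\|x^*-x\|^2 + 2\epsilon\|x^*-x\| + 2\epsilon\|\nabla\varphi(x)\|)$ with $x + d \in B_{\delta_0}(x^*)$. Then $\|\nabla\varphi(x+d)\| \leq \frac{8L_gL_H}{\alpha^3}\|\nabla\varphi(x)\|^2 + \frac{4L_g(2+\alpha)}{\alpha^2}\epsilon\|\nabla\varphi(x)\|$. -/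

import Mathlib

/-!
Write `H = ∇²φ(x*)`. On the ball of radius `δ₀ = α / (2 L_H)` the Hessian stays within `L_H δ₀ = α / 2`
of `H`, so by the mean value inequality `∇φ(u)` stays within `(α / 2) ‖u - x*‖` of `H (u - x*)`.
Since `‖H v‖ ≥ α ‖v‖`, this gives `(α / 2) ‖u - x*‖ ≤ ‖∇φ(u)‖ ≤ L_g ‖u - x*‖` on the ball. The upper
bound at `x + d`, the hypothesis on `‖x* - (x + d)‖`, and the lower bound at `x` turned into
`‖x - x*‖ ≤ (2 / α) ‖∇φ(x)‖` combine to the claim.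
-/

open InnerProductSpace Metric

theorem ContDiff.differentiable_gradient {F : Type*} [NormedAddCommGroup F] [InnerProductSpace ℝ F]
    [CompleteSpace F] {φ : F → ℝ} (hφ : ContDiff ℝ 2 φ) : Differentiable ℝ (gradient φ) :=
  (toDual ℝ F).symm.toContinuousLinearEquiv.differentiable.comp
    ((hφ.fderiv_right le_rfl).differentiable one_ne_zero)

theorem le_norm_apply_of_coercive {F : Type*} [NormedAddCommGroup F] [InnerProductSpace ℝ F]
    {A : F →L[ℝ] F} {α : ℝ} (hA : ∀ v, α * ‖v‖ ^ 2 ≤ inner ℝ (A v) v) (v : F) :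
    α * ‖v‖ ≤ ‖A v‖ := by
  rcases (norm_nonneg v).eq_or_lt with hv | hv
  · simp [← hv]
  · have h : α * ‖v‖ * ‖v‖ ≤ ‖A v‖ * ‖v‖ := by
      nlinarith [hA v, real_inner_le_norm (A v) v]
    exact le_of_mul_le_mul_right h hv

section NearZero

variable {E F : Type*} [NormedAddCommGroup E] [NormedSpace ℝ E] [NormedAddCommGroup F]
  [NormedSpace ℝ F] {f : E → F} {x₀ u : E} {r C : ℝ}

theorem norm_sub_fderiv_apply_le_of_norm_fderiv_sub_le (hf : Differentiable ℝ f)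
    (hC : ∀ y ∈ closedBall x₀ r, ‖fderiv ℝ f y - fderiv ℝ f x₀‖ ≤ C) (hu : u ∈ closedBall x₀ r) :
    ‖f u - f x₀ - fderiv ℝ f x₀ (u - x₀)‖ ≤ C * ‖u - x₀‖ :=
  (convex_closedBall x₀ r).norm_image_sub_le_of_norm_hasFDerivWithin_le'
    (fun y _ => (hf y).hasFDerivAt.hasFDerivWithinAt) hC
    (mem_closedBall_self (nonempty_closedBall.mp ⟨u, hu⟩)) hu

theorem norm_le_of_norm_fderiv_sub_le (hf : Differentiable ℝ f) (hf₀ : f x₀ = 0)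
    (hC : ∀ y ∈ closedBall x₀ r, ‖fderiv ℝ f y - fderiv ℝ f x₀‖ ≤ C) (hu : u ∈ closedBall x₀ r) :
    ‖f u‖ ≤ (‖fderiv ℝ f x₀‖ + C) * ‖u - x₀‖ := by
  have hlin := norm_sub_fderiv_apply_le_of_norm_fderiv_sub_le hf hC hu
  rw [hf₀, sub_zero] at hlin
  calc ‖f u‖ ≤ ‖fderiv ℝ f x₀ (u - x₀)‖ + ‖f u - fderiv ℝ f x₀ (u - x₀)‖ := norm_le_insert' _ _
    _ ≤ ‖fderiv ℝ f x₀‖ * ‖u - x₀‖ + C * ‖u - x₀‖ :=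
        add_le_add ((fderiv ℝ f x₀).le_opNorm _) hlin
    _ = (‖fderiv ℝ f x₀‖ + C) * ‖u - x₀‖ := by ring

theorem le_norm_of_norm_fderiv_sub_le {α : ℝ} (hf : Differentiable ℝ f) (hf₀ : f x₀ = 0)
    (hα : ∀ v, α * ‖v‖ ≤ ‖fderiv ℝ f x₀ v‖)
    (hC : ∀ y ∈ closedBall x₀ r, ‖fderiv ℝ f y - fderiv ℝ f x₀‖ ≤ C) (hu : u ∈ closedBall x₀ r) :
    (α - C) * ‖u - x₀‖ ≤ ‖f u‖ := by
  have hlin := norm_sub_fderiv_apply_le_of_norm_fderiv_sub_le hf hC hu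
  rw [hf₀, sub_zero] at hlin
  have htri : ‖fderiv ℝ f x₀ (u - x₀)‖ ≤ ‖f u‖ + ‖f u - fderiv ℝ f x₀ (u - x₀)‖ := by
    simpa [norm_sub_rev] using norm_le_insert' (fderiv ℝ f x₀ (u - x₀)) (f u)
  linarith [hα (u - x₀)]

end NearZero

theorem le_quadratic_bound_of_step_bound {Lg LH α ε g r D N : ℝ} (hLg : 0 ≤ Lg) (hLH : 0 ≤ LH)
    (hα : 0 < α) (hε : 0 ≤ ε) (hr₀ : 0 ≤ r) (hr : r ≤ 2 / α * g)
    (hD : D ≤ 2 / α * (LH * r ^ 2 + 2 * ε * r + 2 * ε * g)) (hN : N ≤ Lg * D) :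
    N ≤ 8 * Lg * LH / α ^ 3 * g ^ 2 + 4 * Lg * (2 + α) / α ^ 2 * ε * g :=
  calc N ≤ Lg * (2 / α * (LH * r ^ 2 + 2 * ε * r + 2 * ε * g)) :=
        hN.trans (mul_le_mul_of_nonneg_left hD hLg)
    _ ≤ Lg * (2 / α * (LH * (2 / α * g) ^ 2 + 2 * ε * (2 / α * g) + 2 * ε * g)) := by gcongr
    _ = 8 * Lg * LH / α ^ 3 * g ^ 2 + 4 * Lg * (2 + α) / α ^ 2 * ε * g := by
        field_simp
        ring

theorem stmt18 {n : ℕ} (φ : EuclideanSpace ℝ (Fin n) → ℝ) (LH α ε : ℝ)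
    (xstar x d : EuclideanSpace ℝ (Fin n))
    (hφ : ContDiff ℝ 2 φ) (hLH : 0 < LH) (hα : 0 < α) (hε : 0 < ε)
    (hLip : ∀ u v, ‖fderiv ℝ (gradient φ) u - fderiv ℝ (gradient φ) v‖ ≤ LH * ‖u - v‖)
    (hgrad : gradient φ xstar = 0)
    (hpd : ∀ v, α * ‖v‖ ^ 2 ≤ (inner ℝ (fderiv ℝ (gradient φ) xstar v) v : ℝ))
    (hx : ‖x - xstar‖ ≤ α / (2 * LH))
    (hxd : ‖x + d - xstar‖ ≤ α / (2 * LH))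
    (hdist : ‖xstar - (x + d)‖ ≤
      2 / α * (LH * ‖xstar - x‖ ^ 2 + 2 * ε * ‖xstar - x‖ + 2 * ε * ‖gradient φ x‖)) :
    ‖gradient φ (x + d)‖ ≤
      8 * (‖fderiv ℝ (gradient φ) xstar‖ + LH * (α / (2 * LH))) * LH / α ^ 3 *
          ‖gradient φ x‖ ^ 2 +
        4 * (‖fderiv ℝ (gradient φ) xstar‖ + LH * (α / (2 * LH))) * (2 + α) / α ^ 2 *
          ε * ‖gradient φ x‖ := by
  set δ₀ := α / (2 * LH)
  have hdiff := hφ.differentiable_gradient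
  have hHess : ∀ y ∈ closedBall xstar δ₀,
      ‖fderiv ℝ (gradient φ) y - fderiv ℝ (gradient φ) xstar‖ ≤ LH * δ₀ := fun y hy =>
    (hLip y xstar).trans (mul_le_mul_of_nonneg_left (mem_closedBall_iff_norm.mp hy) hLH.le)
  have hlow := le_norm_of_norm_fderiv_sub_le hdiff hgrad (le_norm_apply_of_coercive hpd) hHess
    (mem_closedBall_iff_norm.mpr hx)
  have hup := norm_le_of_norm_fderiv_sub_le hdiff hgrad hHess (mem_closedBall_iff_norm.mpr hxd)
  rw [show α - LH * δ₀ = α / 2 by simp only [δ₀]; field_simp; ring] at hlow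
  rw [norm_sub_rev xstar x, norm_sub_rev xstar] at hdist
  refine le_quadratic_bound_of_step_bound (by positivity) hLH.le hα hε.le (norm_nonneg _) ?_ hdist hup
  rw [div_mul_eq_mul_div, le_div_iff₀ hα]
  linarith
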